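/- Let $A_t \in \{0,1\}$ be actions selected with $P(A_t = 1 \mid \mathcal{H}_{t-1}) = \pi_t \in (0,1)$ where $\pi_t$ is $\mathcal{H}_{t-1}$-measurable, and suppose $\epsilon_t := Y_t - \theta^*_{A_t}$ satisfies $E[\epsilon_t \mid A_t, \mathcal{H}_{t-1}] = 0$ and $E[\epsilon_t^2 \mid A_t, \mathcal{H}_{t-1}] = \sigma^2$. Then with weights $W_t = 1/\sqrt{\pi_{t,A_t}}$ (where $\pi_{t,1} = \pi_t$, $\pi_{t,0} = 1-\pi_t$), the conditional variance of $Z_t = W_t \mathbf{1}\{A_t = 1\}\epsilon_t$ satisfies $E[Z_t^2 \mid \mathcal{H}_{t-1}] = \sigma^2$ exactly, for every $t$, regardless of $\pi_t$. -/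

import Mathlib

/-!
Write `Zₜ² = πₜ⁻¹ 𝟙{Aₜ = 1} εₜ²`; the weight of the arm `Aₜ = 0` drops out. Conditioning first on
`𝒢ₜ`, for which `πₜ⁻¹ 𝟙{Aₜ = 1}` is measurable, replaces `εₜ²` by `σ²`; conditioning then on `ℱₜ`
turns `πₜ⁻¹ 𝟙{Aₜ = 1}` into `πₜ⁻¹ πₜ = 1`. Since `πₜ⁻¹` is unbounded, the first step needs the
pull-out property for a nonnegative factor whose product is not known in advance to be integrable;
it follows by truncating the factor at level `n` and monotone convergence.
-/

open MeasureTheory Filter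

lemma ENNReal.iSup_ofReal_min_natCast_mul (c : ℝ) {d : ℝ} (hd : 0 ≤ d) :
    ⨆ n : ℕ, ENNReal.ofReal (min c n * d) = ENNReal.ofReal (c * d) := by
  refine le_antisymm (iSup_le fun n => ?_) (le_iSup_of_le ⌈c⌉₊ ?_)
  · exact ENNReal.ofReal_le_ofReal (mul_le_mul_of_nonneg_right (min_le_left _ _) hd)
  · rw [min_eq_left (Nat.le_ceil c)]

namespace MeasureTheory

variable {Ω : Type*} {m m0 : MeasurableSpace Ω} {μ : Measure Ω} {f g : Ω → ℝ}

lemma lintegral_ofReal_mul_eq_iSup_min (hg : Measurable g) (hf : AEMeasurable f μ)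
    (hf0 : 0 ≤ᵐ[μ] f) :
    ∫⁻ ω, ENNReal.ofReal (g ω * f ω) ∂μ
      = ⨆ n : ℕ, ∫⁻ ω, ENNReal.ofReal (min (g ω) n * f ω) ∂μ := by
  rw [← lintegral_iSup' (f := fun n ω => ENNReal.ofReal (min (g ω) n * f ω))
    (fun n => ((hg.min measurable_const).aemeasurable.mul hf).ennreal_ofReal)]
  · refine lintegral_congr_ae ?_
    filter_upwards [hf0] with ω hω
    exact (ENNReal.iSup_ofReal_min_natCast_mul _ hω).symm
  · filter_upwards [hf0] with ω hω n k hnk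
    exact ENNReal.ofReal_le_ofReal
      (mul_le_mul_of_nonneg_right (min_le_min le_rfl (Nat.cast_le.mpr hnk)) hω)

theorem lintegral_ofReal_mul_condExp (hm : m ≤ m0) [SigmaFinite (μ.trim hm)]
    (hg : StronglyMeasurable[m] g) (hg0 : 0 ≤ g) (hf : Integrable f μ) (hf0 : 0 ≤ᵐ[μ] f) :
    ∫⁻ ω, ENNReal.ofReal (g ω * f ω) ∂μ = ∫⁻ ω, ENNReal.ofReal (g ω * μ[f | m] ω) ∂μ := by
  have hcond0 : 0 ≤ᵐ[μ] μ[f | m] := condExp_nonneg hf0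
  rw [lintegral_ofReal_mul_eq_iSup_min (hg.measurable.mono hm le_rfl) hf.aemeasurable hf0,
    lintegral_ofReal_mul_eq_iSup_min (hg.measurable.mono hm le_rfl)
      integrable_condExp.aemeasurable hcond0]
  refine iSup_congr fun n => ?_
  let gn : Ω → ℝ := fun ω => min (g ω) n
  have hgn : StronglyMeasurable[m] gn := (hg.measurable.min measurable_const).stronglyMeasurable
  have hgn0 : 0 ≤ gn := fun ω => le_min (hg0 ω) n.cast_nonneg
  have hgn_bdd : ∀ᵐ ω ∂μ, ‖gn ω‖ ≤ n := Eventually.of_forall fun ω => by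
    rw [Real.norm_of_nonneg (hgn0 ω)]
    exact min_le_right _ _
  have hgnf : Integrable (fun ω => gn ω * f ω) μ :=
    hf.bdd_mul (hgn.mono hm).aestronglyMeasurable hgn_bdd
  have hgn_cond : Integrable (fun ω => gn ω * μ[f | m] ω) μ :=
    integrable_condExp.bdd_mul (hgn.mono hm).aestronglyMeasurable hgn_bdd
  rw [← ofReal_integral_eq_lintegral_ofReal hgnf
      (hf0.mono fun ω hω => mul_nonneg (hgn0 ω) hω),
    ← ofReal_integral_eq_lintegral_ofReal hgn_cond
      (hcond0.mono fun ω hω => mul_nonneg (hgn0 ω) hω),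
    ← integral_condExp hm]
  exact congrArg ENNReal.ofReal
    (integral_congr_ae (condExp_mul_of_stronglyMeasurable_left (f := gn) hgn hgnf hf))

theorem integrable_mul_of_integrable_mul_condExp (hm : m ≤ m0) [SigmaFinite (μ.trim hm)]
    (hg : StronglyMeasurable[m] g) (hg0 : 0 ≤ g) (hf : Integrable f μ) (hf0 : 0 ≤ᵐ[μ] f)
    (hgf : Integrable (g * μ[f | m]) μ) : Integrable (g * f) μ := by
  refine ⟨(hg.mono hm).aestronglyMeasurable.mul hf.1, ?_⟩
  change HasFiniteIntegral (fun ω => g ω * f ω) μ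
  rw [hasFiniteIntegral_iff_ofReal (hf0.mono fun ω hω => mul_nonneg (hg0 ω) hω),
    lintegral_ofReal_mul_condExp hm hg hg0 hf hf0]
  exact (hasFiniteIntegral_iff_ofReal ((condExp_nonneg hf0).mono fun ω hω =>
    mul_nonneg (hg0 ω) hω)).1 hgf.2

theorem condExp_mul_of_stronglyMeasurable_left_of_nonneg (hm : m ≤ m0)
    [SigmaFinite (μ.trim hm)] (hg : StronglyMeasurable[m] g) (hg0 : 0 ≤ g) (hf : Integrable f μ)
    (hf0 : 0 ≤ᵐ[μ] f) (hgf : Integrable (g * μ[f | m]) μ) : μ[g * f | m] =ᵐ[μ] g * μ[f | m] :=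
  condExp_mul_of_stronglyMeasurable_left hg
    (integrable_mul_of_integrable_mul_condExp hm hg hg0 hf hf0 hgf) hf

lemma inv_mul_ae_eq_one_of_ae_eq {p : Ω → ℝ} (hp0 : ∀ ω, 0 < p ω) (hfp : f =ᵐ[μ] p) :
    p⁻¹ * f =ᵐ[μ] 1 := by
  filter_upwards [hfp] with ω hω
  simp [hω, (hp0 ω).ne']

section InverseWeighting

variable [IsFiniteMeasure μ] {p : Ω → ℝ}

theorem integrable_inv_mul_of_condExp_eq (hm : m ≤ m0) (hp : StronglyMeasurable[m] p)
    (hp0 : ∀ ω, 0 < p ω) (hf : Integrable f μ) (hf0 : 0 ≤ᵐ[μ] f) (hfp : μ[f | m] =ᵐ[μ] p) :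
    Integrable (p⁻¹ * f) μ :=
  integrable_mul_of_integrable_mul_condExp hm hp.measurable.inv.stronglyMeasurable
    (fun ω => (inv_pos.2 (hp0 ω)).le) hf hf0
    ((integrable_congr (inv_mul_ae_eq_one_of_ae_eq hp0 hfp)).2 (integrable_const 1))

theorem condExp_inv_mul_of_condExp_eq (hm : m ≤ m0) (hp : StronglyMeasurable[m] p)
    (hp0 : ∀ ω, 0 < p ω) (hf : Integrable f μ) (hf0 : 0 ≤ᵐ[μ] f) (hfp : μ[f | m] =ᵐ[μ] p) :
    μ[p⁻¹ * f | m] =ᵐ[μ] 1 :=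
  (condExp_mul_of_stronglyMeasurable_left hp.measurable.inv.stronglyMeasurable
    (integrable_inv_mul_of_condExp_eq hm hp hp0 hf hf0 hfp) hf).trans
    (inv_mul_ae_eq_one_of_ae_eq hp0 hfp)

end InverseWeighting

end MeasureTheory

lemma sq_one_div_sqrt_ite_mul_ite_mul (b : Bool) {p : ℝ} (hp : 0 ≤ p) (e : ℝ) :
    ((1 / Real.sqrt (if b then p else 1 - p)) * (if b then (1 : ℝ) else 0) * e) ^ 2
      = p⁻¹ * (if b then (1 : ℝ) else 0) * e ^ 2 := by
  cases b <;> simp [mul_pow, Real.sq_sqrt hp]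

theorem inverse_sqrt_propensity_variance_stabilizing_general
    {Ω : Type*} {m0 : MeasurableSpace Ω} (μ : Measure Ω) [IsProbabilityMeasure μ]
    (ℱ : Filtration ℕ m0)
    (A : ℕ → Ω → Bool)
    (π : ℕ → Ω → ℝ)
    (hπmeas : ∀ t, StronglyMeasurable[ℱ t] (π t))
    (hπ : ∀ t ω, 0 < π t ω ∧ π t ω < 1)
    (hAprob : ∀ t, μ[fun ω => if A t ω then (1 : ℝ) else 0 | ℱ t] =ᵐ[μ] π t)
    (𝒢 : ℕ → MeasurableSpace Ω)
    (h𝒢 : ∀ t, 𝒢 t = ℱ t ⊔ MeasurableSpace.comap (A t) ⊤)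
    (h𝒢m : ∀ t, 𝒢 t ≤ m0)
    (Y : ℕ → Ω → ℝ) (θtrue : Bool → ℝ) (σ : ℝ)
    (hεint : ∀ t, Integrable (fun ω => (Y t ω - θtrue (A t ω)) ^ 2) μ)
    (hεvar : ∀ t, μ[fun ω => (Y t ω - θtrue (A t ω)) ^ 2 | 𝒢 t]
      =ᵐ[μ] fun _ => σ ^ 2) :
    ∀ t, μ[fun ω =>
        ((1 / Real.sqrt (if A t ω then π t ω else 1 - π t ω))
          * (if A t ω then (1 : ℝ) else 0)
          * (Y t ω - θtrue (A t ω))) ^ 2 | ℱ t]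
      =ᵐ[μ] fun _ => σ ^ 2 := by
  intro t
  set ind : Ω → ℝ := fun ω => if A t ω then 1 else 0
  set ε2 : Ω → ℝ := fun ω => (Y t ω - θtrue (A t ω)) ^ 2
  have hℱ𝒢 : ℱ t ≤ 𝒢 t := h𝒢 t ▸ le_sup_left
  have hA : Measurable[𝒢 t] (A t) := h𝒢 t ▸ Measurable.of_comap_le le_sup_right
  have hπ0 : ∀ ω, 0 < π t ω := fun ω => (hπ t ω).1
  have hind : StronglyMeasurable[𝒢 t] ind :=
    ((measurable_of_finite fun b : Bool => if b then (1 : ℝ) else 0).comp hA).stronglyMeasurable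
  have hind0 : 0 ≤ᵐ[μ] ind := ae_of_all _ fun ω => by positivity
  have hind_int : Integrable ind μ :=
    .of_bound (hind.mono (h𝒢m t)).aestronglyMeasurable 1
      (ae_of_all _ fun ω => by by_cases hb : A t ω <;> simp [ind, hb])
  have hwind : StronglyMeasurable[𝒢 t] ((π t)⁻¹ * ind) :=
    ((hπmeas t).measurable.inv.stronglyMeasurable.mono hℱ𝒢).mul hind
  have hwind0 : 0 ≤ (π t)⁻¹ * ind := fun ω => mul_nonneg (inv_nonneg.2 (hπ0 ω).le) (by positivity)
  have hwind_int : Integrable ((π t)⁻¹ * ind) μ :=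
    integrable_inv_mul_of_condExp_eq (ℱ.le t) (hπmeas t) hπ0 hind_int hind0 (hAprob t)
  have hwind_cond : μ[(π t)⁻¹ * ind | ℱ t] =ᵐ[μ] 1 :=
    condExp_inv_mul_of_condExp_eq (ℱ.le t) (hπmeas t) hπ0 hind_int hind0 (hAprob t)
  have hZ_cond : μ[(π t)⁻¹ * ind * ε2 | 𝒢 t] =ᵐ[μ] (π t)⁻¹ * ind * fun _ => σ ^ 2 := by
    refine (condExp_mul_of_stronglyMeasurable_left_of_nonneg (h𝒢m t) hwind hwind0 (hεint t)
      (ae_of_all _ fun ω => sq_nonneg _) ?_).trans (EventuallyEq.rfl.mul (hεvar t))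
    exact (integrable_congr (EventuallyEq.rfl.mul (hεvar t))).2 (hwind_int.mul_const _)
  calc μ[_ | ℱ t] = μ[(π t)⁻¹ * ind * ε2 | ℱ t] :=
        congrArg _ (funext fun ω => sq_one_div_sqrt_ite_mul_ite_mul _ (hπ0 ω).le _)
    _ =ᵐ[μ] μ[μ[(π t)⁻¹ * ind * ε2 | 𝒢 t] | ℱ t] := (condExp_condExp_of_le hℱ𝒢 (h𝒢m t)).symm
    _ =ᵐ[μ] μ[(π t)⁻¹ * ind * fun _ => σ ^ 2 | ℱ t] := condExp_congr_ae hZ_cond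
    _ =ᵐ[μ] μ[(π t)⁻¹ * ind | ℱ t] * fun _ => σ ^ 2 :=
      condExp_mul_of_stronglyMeasurable_right stronglyMeasurable_const
        (hwind_int.mul_const _) hwind_int
    _ =ᵐ[μ] fun _ => σ ^ 2 := by
      filter_upwards [hwind_cond] with ω hω
      simp [hω]

/-- Variance-stabilizing property of inverse-square-root propensity weights in a
two-armed bandit: with `P(Aₜ = 1 ∣ ℋ_{t-1}) = πₜ ∈ (0,1)` (`πₜ` history
measurable), `E[εₜ ∣ Aₜ, ℋ_{t-1}] = 0`, `E[εₜ² ∣ Aₜ, ℋ_{t-1}] = σ²` where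
`εₜ = Yₜ - θ*_{Aₜ}`, and weights `Wₜ = 1/√(π_{t,Aₜ})`, the weighted score
`Zₜ = Wₜ 𝟙{Aₜ=1} εₜ` satisfies `E[Zₜ² ∣ ℋ_{t-1}] = σ²` exactly. -/
theorem inverse_sqrt_propensity_variance_stabilizing
    {Ω : Type*} {m0 : MeasurableSpace Ω} (μ : Measure Ω) [IsProbabilityMeasure μ]
    (ℱ : Filtration ℕ m0)
    (A : ℕ → Ω → Bool) (hA : ∀ t, Measurable (A t))
    (π : ℕ → Ω → ℝ)
    (hπmeas : ∀ t, StronglyMeasurable[ℱ t] (π t))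
    (hπ : ∀ t ω, 0 < π t ω ∧ π t ω < 1)
    (hAprob : ∀ t, μ[fun ω => if A t ω then (1 : ℝ) else 0 | ℱ t] =ᵐ[μ] π t)
    (𝒢 : ℕ → MeasurableSpace Ω)
    (h𝒢 : ∀ t, 𝒢 t = ℱ t ⊔ MeasurableSpace.comap (A t) ⊤)
    (h𝒢m : ∀ t, 𝒢 t ≤ m0)
    (Y : ℕ → Ω → ℝ) (θtrue : Bool → ℝ) (σ : ℝ)
    (hεint : ∀ t, Integrable (fun ω => (Y t ω - θtrue (A t ω)) ^ 2) μ)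
    (hεmean : ∀ t, μ[fun ω => Y t ω - θtrue (A t ω) | 𝒢 t] =ᵐ[μ] 0)
    (hεvar : ∀ t, μ[fun ω => (Y t ω - θtrue (A t ω)) ^ 2 | 𝒢 t]
      =ᵐ[μ] fun _ => σ ^ 2) :
    ∀ t, μ[fun ω =>
        ((1 / Real.sqrt (if A t ω then π t ω else 1 - π t ω))
          * (if A t ω then (1 : ℝ) else 0)
          * (Y t ω - θtrue (A t ω))) ^ 2 | ℱ t]
      =ᵐ[μ] fun _ => σ ^ 2 :=
  inverse_sqrt_propensity_variance_stabilizing_general μ ℱ A π hπmeas hπ hAprob 𝒢 h𝒢 h𝒢m Y θtrue σ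
    hεint hεvar
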